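/- arXiv:1512.02323 — 5 statements merged into one kernel-verified Lean document; each statement's English description precedes it below -/
import Mathlib

section
/- Let θ be harmonic on the unit disk D_* with |θ| < π/2, θ̃ its conjugate vanishing at 0, and set h(z) = e^{θ̃(z)}·cos θ(z)/(π·cos θ(0)), μ₀ = tan θ(0), and μ(z) = μ₀ − π·h̃(z) where h̃ is the conjugate of h vanishing at 0. Then for all z ∈ D_*, μ(z) = π·h(z)·tan θ(z), and θ(z) = −arg(h(z) − i·μ(z)/π). -/
/-!
With `c = π cos θ(0)`, the function `G = e^{-i(θ + iθ̃)} / c` is holomorphic on the disk with real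
part `e^{θ̃} cos θ / c = h`. Hence `h + i h̃ - G` is holomorphic with vanishing real part, so it is
constant by the open mapping theorem; evaluating at `0` and unfolding `μ` gives `h - iμ/π = G`.
Both claims are read off this identity: its imaginary part gives `μ`, and `arg G = -θ` because
`|θ| < π/2`.
-/

open MeasureTheory Metric Set Filter

noncomputable section

/-- `g` is the harmonic conjugate (vanishing at `0`) of `f` on the open unit disk:
`f + i·g` is analytic on the disk and `g 0 = 0`. -/
def HasHarmConj (f g : ℂ → ℝ) : Prop :=
  DifferentiableOn ℂ (fun z => (f z : ℂ) + Complex.I * (g z : ℂ)) (Metric.ball (0:ℂ) 1) ∧ g 0 = 0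

/-- `f` is harmonic on the open unit disk: on the (simply connected) disk this is
equivalent to being the real part of an analytic function. -/
def HarmonicOnDisk (f : ℂ → ℝ) : Prop := ∃ g : ℂ → ℝ, HasHarmConj f g

open Complex

theorem DifferentiableOn.eqOn_of_re_eq_zero {F : ℂ → ℂ} {U : Set ℂ} {z₀ : ℂ}
    (hF : DifferentiableOn ℂ F U) (hU : IsOpen U) (hUc : IsPreconnected U) (hz₀ : z₀ ∈ U)
    (hre : ∀ z ∈ U, (F z).re = 0) : ∀ z ∈ U, F z = F z₀ := by
  rcases (hF.analyticOnNhd hU).is_constant_or_isOpen hUc with ⟨w, hw⟩ | hopen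
  · intro z hz
    rw [hw z hz, hw z₀ hz₀]
  · -- otherwise `F '' U` would be a nonempty open subset of the imaginary axis
    exfalso
    obtain ⟨ε, hε, hsub⟩ := Metric.isOpen_iff.1 (hopen U subset_rfl hU) (F z₀) ⟨z₀, hz₀, rfl⟩
    obtain ⟨z, hz, hFz⟩ : F z₀ + (ε / 2 : ℝ) ∈ F '' U := hsub (by simp [abs_of_pos hε, hε])
    have hre_z := hre z hz
    rw [hFz, add_re, hre z₀ hz₀, ofReal_re] at hre_z
    linarith

theorem Complex.arg_exp_eq_im {z : ℂ} (hz : z.im ∈ Ioc (-Real.pi) Real.pi) :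
    arg (exp z) = z.im := by
  rw [arg_exp, toIocMod_eq_self, show -Real.pi + 2 * Real.pi = Real.pi by ring]
  exact hz

theorem Complex.arg_div_ofReal {r : ℝ} (hr : 0 < r) (x : ℂ) : arg (x / r) = arg x := by
  rw [div_eq_mul_inv, ← ofReal_inv, arg_mul_real (inv_pos.2 hr)]

theorem Complex.neg_I_mul_add_I_mul_im (a b : ℝ) : (-I * ((a : ℂ) + I * b)).im = -a := by
  simp

theorem Complex.re_exp_neg_I_mul_div (a b r : ℝ) :
    (exp (-I * ((a : ℂ) + I * b)) / r).re = Real.exp b * Real.cos a / r := by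
  simp [exp_re]

theorem Complex.im_exp_neg_I_mul_div (a b r : ℝ) :
    (exp (-I * ((a : ℂ) + I * b)) / r).im = -(Real.exp b * Real.sin a / r) := by
  simp [exp_im, neg_div]

theorem HasHarmConj.ofReal_sub_I_mul_eq_exp {θ θtil h htil μ : ℂ → ℝ}
    (hconjθ : HasHarmConj θ θtil) (hconjh : HasHarmConj h htil)
    (hh : ∀ z ∈ ball (0:ℂ) 1,
      h z = Real.exp (θtil z) * Real.cos (θ z) / (Real.pi * Real.cos (θ 0)))
    (hμ : ∀ z, μ z = Real.tan (θ 0) - Real.pi * htil z) :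
    ∀ z ∈ ball (0:ℂ) 1, (h z : ℂ) - I * ((μ z / Real.pi : ℝ) : ℂ) =
      exp (-I * ((θ z : ℂ) + I * θtil z)) / (Real.pi * Real.cos (θ 0) : ℝ) := by
  obtain ⟨hθd, hθtil0⟩ := hconjθ
  obtain ⟨hhd, hhtil0⟩ := hconjh
  have hGd : DifferentiableOn ℂ
      (fun z ↦ exp (-I * ((θ z : ℂ) + I * θtil z)) / (Real.pi * Real.cos (θ 0) : ℝ)) (ball 0 1) :=
    ((hθd.const_mul (-I)).cexp).div_const _
  have hconst := (hhd.sub hGd).eqOn_of_re_eq_zero isOpen_ball (convex_ball 0 1).isPreconnected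
    (mem_ball_self one_pos) fun z hz ↦ by
      simp only [Pi.sub_apply, sub_re, add_re, ofReal_re, I_mul_re, ofReal_im, neg_zero,
        add_zero, re_exp_neg_I_mul_div, hh z hz, sub_self]
  intro z hz
  have him := congrArg im (hconst z hz)
  simp only [Pi.sub_apply, sub_im, add_im, ofReal_im, I_mul_im, ofReal_re, zero_add,
    im_exp_neg_I_mul_div, hhtil0, hθtil0, Real.exp_zero, one_mul, sub_neg_eq_add] at him
  apply Complex.ext
  · simp only [sub_re, ofReal_re, I_mul_re, ofReal_im, neg_zero, sub_zero, re_exp_neg_I_mul_div,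
      hh z hz]
  · simp only [sub_im, ofReal_im, I_mul_im, ofReal_re, zero_sub, im_exp_neg_I_mul_div, hμ z,
      Real.tan_eq_sin_div_cos, eq_sub_of_add_eq him]
    field_simp
    ring

/-- With `h = e^{θ̃} cos θ/(π cos θ(0))`, `μ₀ = tan θ(0)`, and `μ = μ₀ − π·h̃`,
one has `μ = π·h·tan θ` and `θ = −arg(h − i·μ/π)` on the disk. -/
theorem stmt_4 (θ θtil h htil μ : ℂ → ℝ)
    (hconjθ : HasHarmConj θ θtil)
    (hlt : ∀ z ∈ Metric.ball (0:ℂ) 1, |θ z| < Real.pi / 2)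
    (hh : ∀ z ∈ Metric.ball (0:ℂ) 1,
      h z = Real.exp (θtil z) * Real.cos (θ z) / (Real.pi * Real.cos (θ 0)))
    (hconjh : HasHarmConj h htil)
    (hμ : ∀ z, μ z = Real.tan (θ 0) - Real.pi * htil z) :
    ∀ z ∈ Metric.ball (0:ℂ) 1,
      μ z = Real.pi * h z * Real.tan (θ z) ∧
      θ z = - Complex.arg ((h z : ℂ) - Complex.I * ((μ z / Real.pi : ℝ) : ℂ)) := by
  intro z hz
  have key := hconjθ.ofReal_sub_I_mul_eq_exp hconjh hh hμ z hz
  have hθz := abs_lt.1 (hlt z hz)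
  have hcos : 0 < Real.cos (θ z) := Real.cos_pos_of_mem_Ioo hθz
  have hcos0 : 0 < Real.cos (θ 0) :=
    Real.cos_pos_of_mem_Ioo (abs_lt.1 (hlt 0 (mem_ball_self one_pos)))
  constructor
  · have him := congrArg im key
    simp only [sub_im, ofReal_im, I_mul_im, ofReal_re, zero_sub, im_exp_neg_I_mul_div, neg_inj]
      at him
    rw [hh z hz, Real.tan_eq_sin_div_cos]
    field_simp at him ⊢
    linarith
  · have him : (-I * ((θ z : ℂ) + I * θtil z)).im ∈ Ioc (-Real.pi) Real.pi := by
      rw [neg_I_mul_add_I_mul_im]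
      constructor <;> linarith [Real.pi_pos]
    rw [key, arg_div_ofReal (by positivity), arg_exp_eq_im him, neg_I_mul_add_I_mul_im, neg_neg]
end
end

section
/- Let α: [0, π] → [0, ∞) be continuous with α(0) = 0, α ≥ 0, and ∫_0^{π/2} α(t)/t dt = ∞. Define θ(e^{it}) = −α(t) for 0 ≤ t ≤ π and θ = 0 on the lower half of the unit circle, let θ(z) be the bounded harmonic extension to the disk and θ̃ its conjugate vanishing at 0. Then for 0 < r < 1, with b(r) = arccos((1+r)/2), the bound θ̃(r) ≥ (r/(2π)) ∫_{b(r)}^{π} α(t)/tan(t/2) dt holds, and consequently θ̃(r) → +∞ as r → 1⁻. -/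
open MeasureTheory Metric Set Filter

noncomputable section

/-!
Write `K_r(t) = 2r sin t / |e^{it} - r|²` for the conjugate Poisson kernel, so that
`θ̃(r) = (1/2π) ∫₀^π K_r α`. Since `|e^{it} - r|² = 1 - 2r cos t + r²` is at most
`|e^{it} - 1|² = 2 - 2 cos t` as soon as `cos t ≤ (1+r)/2`, i.e. for `t ≥ b(r)`, the kernel
dominates `r sin t / (1 - cos t) = r / tan (t/2)` there; dropping the nonnegative part over
`[0, b(r)]` gives the lower bound. As `r → 1⁻`, `b(r) → 0⁺`, and `1 / tan (t/2) ≥ 1 / t` on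
`(0, π/2]`, so the lower bound dominates `(r/2π) ∫_{b(r)}^{π/2} α(t)/t dt`, which diverges with
the Dini integral.
-/

open Real Topology

theorem inv_tan_half (t : ℝ) : (tan (t / 2))⁻¹ = sin t / (1 - cos t) := by
  have hsin : sin t = 2 * sin (t / 2) * cos (t / 2) := by
    rw [← sin_two_mul]; ring_nf
  have hcos : 1 - cos t = 2 * sin (t / 2) ^ 2 := by
    rw [sin_sq_eq_half_sub]; ring_nf
  rw [tan_eq_sin_div_cos, inv_div, hsin, hcos]
  rcases eq_or_ne (sin (t / 2)) 0 with h | h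
  · simp [h]
  · field_simp

theorem tan_half_le_self {t : ℝ} (h0 : 0 ≤ t) (h1 : t ≤ 2 * π / 3) : tan (t / 2) ≤ t := by
  have hcos : 1 / 2 ≤ cos (t / 2) := by
    rw [← cos_pi_div_three]
    exact cos_le_cos_of_nonneg_of_le_pi (by linarith) (by linarith [pi_pos]) (by linarith)
  rw [tan_eq_sin_div_cos, div_le_iff₀ (by linarith)]
  nlinarith [sin_le (by linarith : 0 ≤ t / 2)]

theorem intervalIntegrable_div_tan_half {α : ℝ → ℝ} {a c : ℝ} (hα : ContinuousOn α (Icc a c))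
    (ha : 0 < a) (hac : a ≤ c) (hc : c < 2 * π) :
    IntervalIntegrable (fun t => α t / tan (t / 2)) volume a c := by
  have hfun : (fun t => α t / tan (t / 2)) = fun t => α t * (sin t / (1 - cos t)) :=
    funext fun t => by rw [div_eq_mul_inv, inv_tan_half]
  rw [hfun]
  refine ContinuousOn.intervalIntegrable ?_
  rw [uIcc_of_le hac]
  refine hα.mul (continuous_sin.continuousOn.div (by fun_prop) fun t ht => ?_)
  rw [sub_ne_zero, ne_comm, Ne, cos_eq_one_iff_of_lt_of_lt (by linarith [ht.1, pi_pos])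
    (by linarith [ht.2])]
  linarith [ht.1]

def conjPoissonKernel (r t : ℝ) : ℝ :=
  2 * r * sin t / ‖Complex.exp ((t : ℂ) * Complex.I) - (r : ℂ)‖ ^ 2

theorem norm_exp_mul_I_sub_ofReal_sq (r t : ℝ) :
    ‖Complex.exp ((t : ℂ) * Complex.I) - (r : ℂ)‖ ^ 2 = 1 - 2 * r * cos t + r ^ 2 := by
  rw [← Complex.normSq_eq_norm_sq, Complex.exp_mul_I, ← Complex.ofReal_cos,
    ← Complex.ofReal_sin, Complex.normSq_apply]
  simp only [Complex.sub_re, Complex.sub_im, Complex.add_re, Complex.add_im, Complex.mul_re,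
    Complex.mul_im, Complex.ofReal_re, Complex.ofReal_im, Complex.I_re, Complex.I_im]
  nlinarith [sin_sq_add_cos_sq t]

theorem exp_mul_I_sub_ofReal_ne_zero {r : ℝ} (hr : |r| < 1) (t : ℝ) :
    Complex.exp ((t : ℂ) * Complex.I) - (r : ℂ) ≠ 0 := by
  intro h
  have := congrArg norm (sub_eq_zero.1 h)
  rw [Complex.norm_exp_ofReal_mul_I, Complex.norm_real, Real.norm_eq_abs] at this
  linarith

theorem conjPoissonKernel_eq (r t : ℝ) :
    conjPoissonKernel r t = 2 * r * sin t / (1 - 2 * r * cos t + r ^ 2) := by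
  rw [conjPoissonKernel, norm_exp_mul_I_sub_ofReal_sq]

theorem continuous_conjPoissonKernel {r : ℝ} (hr : |r| < 1) :
    Continuous (conjPoissonKernel r) :=
  Continuous.div (by fun_prop) (by fun_prop) fun t =>
    pow_ne_zero 2 (norm_ne_zero_iff.2 (exp_mul_I_sub_ofReal_ne_zero hr t))

theorem conjPoissonKernel_nonneg {r t : ℝ} (hr : 0 ≤ r) (ht : 0 ≤ sin t) :
    0 ≤ conjPoissonKernel r t := by
  unfold conjPoissonKernel
  positivity

theorem mul_inv_tan_half_le_conjPoissonKernel {r t : ℝ} (hr0 : 0 ≤ r) (hr1 : r < 1)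
    (hsin : 0 ≤ sin t) (hcos : cos t ≤ (1 + r) / 2) :
    r * (tan (t / 2))⁻¹ ≤ conjPoissonKernel r t := by
  have hpos : 0 < 1 - 2 * r * cos t + r ^ 2 := by
    rw [← norm_exp_mul_I_sub_ofReal_sq]
    exact pow_pos (norm_pos_iff.2 (exp_mul_I_sub_ofReal_ne_zero (by rwa [abs_of_nonneg hr0]) t)) 2
  have hkey : 1 - 2 * r * cos t + r ^ 2 ≤ 2 * (1 - cos t) := by nlinarith
  calc r * (tan (t / 2))⁻¹ = 2 * r * sin t / (2 * (1 - cos t)) := by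
        rw [inv_tan_half, mul_div_assoc', mul_assoc]
        exact (mul_div_mul_left _ _ two_ne_zero).symm
    _ ≤ 2 * r * sin t / (1 - 2 * r * cos t + r ^ 2) :=
        div_le_div_of_nonneg_left (by positivity) hpos hkey
    _ = conjPoissonKernel r t := (conjPoissonKernel_eq r t).symm

theorem mul_integral_div_tan_half_le_integral_conjPoissonKernel {α : ℝ → ℝ} {r : ℝ}
    (hα : ContinuousOn α (Icc 0 π)) (hα0 : ∀ t ∈ Icc 0 π, 0 ≤ α t) (hr0 : 0 ≤ r) (hr1 : r < 1) :
    r * ∫ t in arccos ((1 + r) / 2)..π, α t / tan (t / 2)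
      ≤ ∫ t in (0 : ℝ)..π, conjPoissonKernel r t * α t := by
  set b := arccos ((1 + r) / 2)
  have hb0 : 0 < b := arccos_pos.2 (by linarith)
  have hbπ : b ≤ π := arccos_le_pi _
  have hcosb : cos b = (1 + r) / 2 := cos_arccos (by linarith) (by linarith)
  have hKα : IntervalIntegrable (fun t => conjPoissonKernel r t * α t) volume 0 π := by
    refine ContinuousOn.intervalIntegrable ?_
    rw [uIcc_of_le pi_pos.le]
    exact (continuous_conjPoissonKernel (by rwa [abs_of_nonneg hr0])).continuousOn.mul hα
  rw [← intervalIntegral.integral_const_mul]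
  calc ∫ t in b..π, r * (α t / tan (t / 2))
      ≤ ∫ t in b..π, conjPoissonKernel r t * α t := by
        refine intervalIntegral.integral_mono_on hbπ
          ((intervalIntegrable_div_tan_half (hα.mono (Icc_subset_Icc_left hb0.le)) hb0 hbπ
            (by linarith [pi_pos])).const_mul r)
          (hKα.mono_set (uIcc_subset_uIcc_right (mem_uIcc_of_le hb0.le hbπ))) fun t ht => ?_
        have hcos : cos t ≤ (1 + r) / 2 :=
          hcosb ▸ cos_le_cos_of_nonneg_of_le_pi hb0.le ht.2 ht.1
        calc r * (α t / tan (t / 2)) = r * (tan (t / 2))⁻¹ * α t := by ring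
          _ ≤ conjPoissonKernel r t * α t := mul_le_mul_of_nonneg_right
            (mul_inv_tan_half_le_conjPoissonKernel hr0 hr1
              (sin_nonneg_of_nonneg_of_le_pi (hb0.le.trans ht.1) ht.2) hcos)
            (hα0 t ⟨hb0.le.trans ht.1, ht.2⟩)
    _ ≤ ∫ t in (0 : ℝ)..π, conjPoissonKernel r t * α t :=
        intervalIntegral.integral_mono_interval hb0.le hbπ le_rfl
          ((ae_restrict_mem measurableSet_Ioc).mono fun t ht => mul_nonneg
            (conjPoissonKernel_nonneg hr0 (sin_nonneg_of_nonneg_of_le_pi ht.1.le ht.2))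
            (hα0 t (Ioc_subset_Icc_self ht))) hKα

theorem tendsto_intervalIntegral_atTop_of_not_integrableOn {f : ℝ → ℝ} {a c : ℝ}
    (hf : ContinuousOn f (Ioc a c)) (hf0 : ∀ t ∈ Ioc a c, 0 ≤ f t)
    (hnot : ¬ IntegrableOn f (Ioc a c)) :
    Tendsto (fun b => ∫ t in b..c, f t) (𝓝[>] a) atTop := by
  have hint : ∀ b, a < b → IntegrableOn f (Ioc b c) := fun b hb =>
    ((hf.mono fun t ht => ⟨hb.trans_le ht.1, ht.2⟩).integrableOn_Icc).mono_set Ioc_subset_Icc_self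
  have hac : a < c := by
    by_contra h
    exact hnot (by simp [Ioc_eq_empty h])
  have hunbdd : ∀ M, ∃ b₀ ∈ Ioo a c, M ≤ ∫ t in b₀..c, f t := by
    intro M
    by_contra! h
    have hu : Tendsto (fun n : ℕ => a + 1 / ((n : ℝ) + 1)) atTop (𝓝 a) := by
      simpa using (tendsto_one_div_add_atTop_nhds_zero_nat (𝕜 := ℝ)).const_add a
    have hu_gt : ∀ n : ℕ, a < a + 1 / ((n : ℝ) + 1) := fun n =>
      lt_add_of_pos_right a (by positivity)
    refine hnot (integrableOn_Ioc_of_intervalIntegral_norm_bounded_left (I := M)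
      (fun n => hint _ (hu_gt n)) hu ?_)
    filter_upwards [hu.eventually (gt_mem_nhds hac)] with n hn
    rw [setIntegral_congr_fun measurableSet_Ioc
      fun t ht => Real.norm_of_nonneg (hf0 t ⟨hu_gt n |>.trans ht.1, ht.2⟩),
      ← intervalIntegral.integral_of_le hn.le]
    exact (h _ ⟨hu_gt n, hn⟩).le
  rw [Filter.tendsto_atTop]
  intro M
  obtain ⟨b₀, hb₀, hM⟩ := hunbdd M
  filter_upwards [Ioo_mem_nhdsGT hb₀.1] with b hb
  refine hM.trans (intervalIntegral.integral_mono_interval hb.2.le hb₀.2.le le_rfl ?_ ?_)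
  · exact (ae_restrict_mem measurableSet_Ioc).mono fun t ht => hf0 t ⟨hb.1.trans ht.1, ht.2⟩
  · exact (intervalIntegrable_iff_integrableOn_Ioc_of_le (hb.2.trans hb₀.2).le).2 (hint b hb.1)

theorem tendsto_arccos_one_add_div_two :
    Tendsto (fun r => arccos ((1 + r) / 2)) (𝓝[<] 1) (𝓝[>] 0) := by
  refine tendsto_nhdsWithin_iff.2 ⟨?_, ?_⟩
  · have hcont : Continuous fun r => arccos ((1 + r) / 2) := by fun_prop
    exact (hcont.tendsto' 1 0 (by norm_num)).mono_left nhdsWithin_le_nhds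
  · filter_upwards [self_mem_nhdsWithin] with r (hr : r < 1)
    exact arccos_pos.2 (by linarith)

theorem integral_div_le_integral_div_tan_half {α : ℝ → ℝ} {b : ℝ}
    (hα : ContinuousOn α (Icc b π)) (hα0 : ∀ t ∈ Icc b π, 0 ≤ α t) (hb0 : 0 < b)
    (hb : b ≤ π / 2) :
    ∫ t in b..π / 2, α t / t ≤ ∫ t in b..π, α t / tan (t / 2) := by
  have hπ := pi_pos
  calc ∫ t in b..π / 2, α t / t
      ≤ ∫ t in b..π / 2, α t / tan (t / 2) := by
        refine intervalIntegral.integral_mono_on hb ?_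
          (intervalIntegrable_div_tan_half (hα.mono (Icc_subset_Icc_right (by linarith)))
            hb0 hb (by linarith)) fun t ht => ?_
        · refine ContinuousOn.intervalIntegrable ?_
          rw [uIcc_of_le hb]
          exact (hα.mono (Icc_subset_Icc_right (by linarith))).div continuousOn_id
            fun t ht => (hb0.trans_le ht.1).ne'
        · exact div_le_div_of_nonneg_left (hα0 t ⟨ht.1, by linarith [ht.2]⟩)
            (tan_pos_of_pos_of_lt_pi_div_two (by linarith [ht.1]) (by linarith [ht.2]))
            (tan_half_le_self (by linarith [ht.1]) (by linarith [ht.2]))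
    _ ≤ ∫ t in b..π, α t / tan (t / 2) := by
        refine intervalIntegral.integral_mono_interval le_rfl hb (by linarith) ?_
          (intervalIntegrable_div_tan_half hα hb0 (by linarith) (by linarith))
        refine (ae_restrict_mem measurableSet_Ioc).mono fun t ht => div_nonneg
          (hα0 t (Ioc_subset_Icc_self ht)) (tan_nonneg_of_nonneg_of_le_pi_div_two ?_ ?_)
        · linarith [ht.1]
        · linarith [ht.2]

theorem stmt_10_general (α : ℝ → ℝ)
    (hcont : ContinuousOn α (Set.Icc 0 Real.pi))
    (hnn : ∀ t ∈ Set.Icc 0 Real.pi, 0 ≤ α t)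
    (hdini : ¬ MeasureTheory.IntegrableOn (fun t => α t / t) (Set.Ioc 0 (Real.pi / 2)))
    (θtil : ℝ → ℝ)
    (hθtil : ∀ r, θtil r = (1 / (2 * Real.pi)) *
      ∫ t in (0:ℝ)..Real.pi,
        (2 * r * Real.sin t / (‖Complex.exp ((t:ℂ) * Complex.I) - (r:ℂ)‖)^2)
          * α t) :
    (∀ r ∈ Set.Ioo (0:ℝ) 1,
      (r / (2 * Real.pi)) *
          ∫ t in Real.arccos ((1 + r) / 2)..Real.pi, α t / Real.tan (t / 2)
        ≤ θtil r) ∧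
    Filter.Tendsto θtil (nhdsWithin 1 (Set.Iio 1)) Filter.atTop := by
  have hπ := pi_pos
  have hbound : ∀ r ∈ Ioo (0 : ℝ) 1, (r / (2 * π)) *
      ∫ t in arccos ((1 + r) / 2)..π, α t / tan (t / 2) ≤ θtil r := by
    intro r hr
    rw [hθtil, div_eq_mul_one_div r, mul_comm r, mul_assoc]
    exact mul_le_mul_of_nonneg_left
      (mul_integral_div_tan_half_le_integral_conjPoissonKernel hcont hnn hr.1.le hr.2)
      (by positivity)
  refine ⟨hbound, ?_⟩
  have hdini_tail : Tendsto (fun b => ∫ t in b..π / 2, α t / t) (𝓝[>] 0) atTop :=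
    tendsto_intervalIntegral_atTop_of_not_integrableOn
      ((hcont.mono fun t ht => ⟨ht.1.le, by linarith [ht.2]⟩).div continuousOn_id
        fun t ht => ht.1.ne')
      (fun t ht => div_nonneg (hnn t ⟨ht.1.le, by linarith [ht.2]⟩) ht.1.le) hdini
  have hlower : Tendsto (fun r => r / (2 * π) * ∫ t in arccos ((1 + r) / 2)..π / 2, α t / t)
      (𝓝[<] 1) atTop := by
    refine Tendsto.pos_mul_atTop (C := 1 / (2 * π)) (by positivity) ?_
      (hdini_tail.comp tendsto_arccos_one_add_div_two)
    exact ((continuous_id.div_const _).tendsto' 1 _ rfl).mono_left nhdsWithin_le_nhds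
  refine tendsto_atTop_mono' _ ?_ hlower
  filter_upwards [Ioo_mem_nhdsLT one_pos] with r hr
  refine le_trans (mul_le_mul_of_nonneg_left ?_ (div_nonneg hr.1.le (by positivity))) (hbound r hr)
  exact integral_div_le_integral_div_tan_half (hcont.mono (Icc_subset_Icc_left (arccos_nonneg _)))
    (fun t ht => hnn t ⟨(arccos_nonneg _).trans ht.1, ht.2⟩) (arccos_pos.2 (by linarith [hr.2]))
    (arccos_le_pi_div_two.2 (by linarith [hr.1]))

/-- For continuous `α ≥ 0` on `[0, π]` with `α 0 = 0` and divergent Dini integral, the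
harmonic conjugate at radius `r` of the boundary data `θ(e^{it}) = −α(t)` (on the upper
semicircle, `0` below), given by the explicit Poisson-conjugate formula, satisfies the
lower bound with `b(r) = arccos((1+r)/2)` and tends to `+∞` as `r → 1⁻`. -/
theorem stmt_10 (α : ℝ → ℝ)
    (hcont : ContinuousOn α (Set.Icc 0 Real.pi))
    (hα0 : α 0 = 0)
    (hnn : ∀ t ∈ Set.Icc 0 Real.pi, 0 ≤ α t)
    (hdini : ¬ MeasureTheory.IntegrableOn (fun t => α t / t) (Set.Ioc 0 (Real.pi / 2)))
    (θtil : ℝ → ℝ)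
    (hθtil : ∀ r, θtil r = (1 / (2 * Real.pi)) *
      ∫ t in (0:ℝ)..Real.pi,
        (2 * r * Real.sin t / (‖Complex.exp ((t:ℂ) * Complex.I) - (r:ℂ)‖)^2)
          * α t) :
    (∀ r ∈ Set.Ioo (0:ℝ) 1,
      (r / (2 * Real.pi)) *
          ∫ t in Real.arccos ((1 + r) / 2)..Real.pi, α t / Real.tan (t / 2)
        ≤ θtil r) ∧
    Filter.Tendsto θtil (nhdsWithin 1 (Set.Iio 1)) Filter.atTop :=
  stmt_10_general α hcont hnn hdini θtil hθtil
end
end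

section
/- Let h be continuous on D_* ∪ I, where I ⊂ ∂D_* is an open arc, harmonic and strictly positive on D_*, with h = 0 on I, and suppose f = h + i·h̃ − i·μ₀/π extends analytically across I (h̃ the conjugate of h vanishing at 0, μ₀ ∈ ℝ). Then on I, the boundary function t ↦ Im f(e^{it}) is strictly monotone (non-increasing derivative from the Cauchy–Riemann equations, and not constant on any subarc), so f maps I injectively onto a subarc of the imaginary axis, and f has at most one zero on I. -/
/-!
Inside the disk `Re G = h > 0`, and on the arc `Re G = h = 0` by continuity. So at each point
`e^{it}` of the arc, `r ↦ Re G (r e^{it})` is minimal at `r = 1` on `[0, 1]`, and its derivative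
there, `Re (G'(e^{it}) e^{it})`, is `≤ 0`; by the Cauchy–Riemann equations this is also the
derivative of `t ↦ Im G (e^{it})`, which is therefore antitone. Were it constant on a subinterval,
`G` would be constant (and purely imaginary) on a subarc, hence by the identity theorem on the
connected set `D ∪ I` on all of `D`, contradicting `Re G (0) = h 0 > 0`. Injectivity of `G` on the
arc then follows from the strict monotonicity of its imaginary part.
-/

open MeasureTheory Metric Set Filter

noncomputable section

open Complex Topology

theorem re_deriv_mul_nonpos_of_re_le_on_ball {F : ℂ → ℂ} {y : ℂ}
    (hF : DifferentiableAt ℂ F y) (hy : ‖y‖ = 1)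
    (hmin : ∀ z ∈ ball (0 : ℂ) 1, (F y).re ≤ (F z).re) :
    (deriv F y * y).re ≤ 0 := by
  have hray : HasDerivAt (fun w : ℂ => F (w * y)) (deriv F y * y) (1 : ℝ) := by
    have hF' : HasDerivAt F (deriv F y) ((1 : ℝ) * y) := by simpa using hF.hasDerivAt
    have hmul : HasDerivAt (fun w : ℂ => w * y) y ((1 : ℝ) : ℂ) := by
      simpa using (hasDerivAt_id ((1 : ℝ) : ℂ)).mul_const y
    exact hF'.comp (h := fun w : ℂ => w * y) _ hmul
  have hmin' : IsMinOn (fun r : ℝ => (F (r * y)).re) (Icc 0 1) 1 := by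
    intro r hr
    change (F ((1 : ℝ) * y)).re ≤ (F (r * y)).re
    rw [ofReal_one, one_mul]
    rcases hr.2.eq_or_lt with rfl | hr1
    · simp
    · refine hmin _ ?_
      simpa [hy, abs_of_nonneg hr.1] using hr1
  have hcone : (-1 : ℝ) ∈ posTangentConeAt (Icc (0 : ℝ) 1) 1 :=
    mem_posTangentConeAt_of_segment_subset (by simp [segment_eq_Icc'])
  simpa using hmin'.localize.hasFDerivWithinAt_nonneg
    hray.real_of_complex.hasFDerivAt.hasFDerivWithinAt hcone

theorem hasDerivAt_exp_ofReal_mul_I (t : ℝ) :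
    HasDerivAt (fun s : ℝ => cexp (s * I)) (cexp (t * I) * I) t :=
  (((hasDerivAt_id (t : ℂ)).mul_const I).cexp.comp_ofReal).congr_deriv (by simp)

theorem hasDerivAt_im_comp_exp_ofReal_mul_I {G : ℂ → ℂ} {t : ℝ}
    (hG : DifferentiableAt ℂ G (cexp (t * I))) :
    HasDerivAt (fun s : ℝ => (G (cexp (s * I))).im)
      (deriv G (cexp (t * I)) * cexp (t * I)).re t :=
  (imCLM.hasFDerivAt.comp_hasDerivAt t
    (hG.hasDerivAt.comp t (hasDerivAt_exp_ofReal_mul_I t))).congr_deriv (by simp [← mul_assoc])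

theorem exp_ofReal_mul_I_image_subset_sphere (s : Set ℝ) :
    (fun t : ℝ => cexp (t * I)) '' s ⊆ sphere 0 1 := by
  rintro _ ⟨t, -, rfl⟩
  simp [norm_exp_ofReal_mul_I]

theorem ball_union_subset_closure_ball {E : Type*} [NormedAddCommGroup E] [NormedSpace ℝ E]
    {x : E} {r : ℝ} (hr : r ≠ 0) {S : Set E} (hS : S ⊆ sphere x r) :
    ball x r ∪ S ⊆ closure (ball x r) := by
  rw [closure_ball x hr]
  exact union_subset ball_subset_closedBall (hS.trans sphere_subset_closedBall)

theorem DifferentiableOn.eqOn_of_isPreconnected_of_frequently_eq {E : Type*}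
    [NormedAddCommGroup E] [NormedSpace ℂ E] [CompleteSpace E] {f g : ℂ → E} {U S : Set ℂ}
    (hf : DifferentiableOn ℂ f U) (hg : DifferentiableOn ℂ g U) (hU : IsOpen U)
    (hS : IsPreconnected S) (hSU : S ⊆ U) {z₀ : ℂ} (hz₀ : z₀ ∈ S)
    (hfg : ∃ᶠ z in 𝓝[≠] z₀, f z = g z) : EqOn f g S := by
  have hVU := connectedComponentIn_subset U z₀
  have hSV := hS.subset_connectedComponentIn hz₀ hSU
  refine (AnalyticOnNhd.eqOn_of_preconnected_of_frequently_eq ((hf.analyticOnNhd hU).mono hVU)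
    ((hg.analyticOnNhd hU).mono hVU) isPreconnected_connectedComponentIn (hSV hz₀) hfg).mono hSV

section UnitCircleArc

variable {G : ℂ → ℂ} {a b : ℝ}

theorem antitoneOn_im_comp_exp_ofReal_mul_I
    (hG : ∀ t ∈ Ioo a b, DifferentiableAt ℂ G (cexp (t * I)))
    (hre : ∀ t ∈ Ioo a b, (G (cexp (t * I))).re = 0)
    (hnonneg : ∀ z ∈ ball (0 : ℂ) 1, 0 ≤ (G z).re) :
    AntitoneOn (fun t : ℝ => (G (cexp (t * I))).im) (Ioo a b) := by
  have hderiv t (ht : t ∈ Ioo a b) := hasDerivAt_im_comp_exp_ofReal_mul_I (hG t ht)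
  refine antitoneOn_of_deriv_nonpos (convex_Ioo a b)
    (fun t ht => (hderiv t ht).continuousAt.continuousWithinAt) ?_ ?_
  · rw [interior_Ioo]
    exact fun t ht => (hderiv t ht).differentiableAt.differentiableWithinAt
  · rw [interior_Ioo]
    intro t ht
    rw [(hderiv t ht).deriv]
    exact re_deriv_mul_nonpos_of_re_le_on_ball (hG t ht) (norm_exp_ofReal_mul_I t)
      fun z hz => (hre t ht).trans_le (hnonneg z hz)

theorem eqOn_ball_of_eqOn_exp_ofReal_mul_I {U : Set ℂ} (hU : IsOpen U)
    (hG : DifferentiableOn ℂ G U) {t₁ t₂ : ℝ} (ht : t₁ < t₂)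
    (hsub : ball 0 1 ∪ (fun t : ℝ => cexp (t * I)) '' Icc t₁ t₂ ⊆ U) {w : ℂ}
    (hw : ∀ t ∈ Icc t₁ t₂, G (cexp (t * I)) = w) : EqOn G (fun _ => w) (ball 0 1) := by
  have hS : IsPreconnected (ball (0 : ℂ) 1 ∪ (fun t : ℝ => cexp (t * I)) '' Icc t₁ t₂) :=
    (convex_ball 0 1).isPreconnected.subset_closure subset_union_left
      (ball_union_subset_closure_ball one_ne_zero (exp_ofReal_mul_I_image_subset_sphere _))
  have harc : Tendsto (fun t : ℝ => cexp (t * I)) (𝓝[>] t₁) (𝓝[≠] (cexp (t₁ * I))) :=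
    ((hasDerivAt_exp_ofReal_mul_I t₁).tendsto_nhdsNE (by simp)).mono_left (nhdsGT_le_nhdsNE t₁)
  have hfreq : ∃ᶠ z in 𝓝[≠] (cexp (t₁ * I)), G z = w :=
    harc.frequently (Eventually.frequently (mem_of_superset (Icc_mem_nhdsGT ht) hw))
  exact (hG.eqOn_of_isPreconnected_of_frequently_eq (differentiableOn_const w) hU hS hsub
    (Or.inr (mem_image_of_mem _ (left_mem_Icc.2 ht.le))) hfreq).mono subset_union_left

theorem strictAntiOn_im_comp_exp_ofReal_mul_I {U : Set ℂ} (hU : IsOpen U)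
    (hG : DifferentiableOn ℂ G U)
    (hsub : ball 0 1 ∪ (fun t : ℝ => cexp (t * I)) '' Ioo a b ⊆ U)
    (hre : ∀ t ∈ Ioo a b, (G (cexp (t * I))).re = 0)
    (hpos : ∀ z ∈ ball (0 : ℂ) 1, 0 < (G z).re) :
    StrictAntiOn (fun t : ℝ => (G (cexp (t * I))).im) (Ioo a b) := by
  have hanti := antitoneOn_im_comp_exp_ofReal_mul_I
    (fun t ht => hG.differentiableAt (hU.mem_nhds (hsub (Or.inr (mem_image_of_mem _ ht)))))
    hre fun z hz => (hpos z hz).le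
  intro t₁ ht₁ t₂ ht₂ ht
  refine (hanti ht₁ ht₂ ht.le).lt_of_ne fun heq => ?_
  have hIcc : Icc t₁ t₂ ⊆ Ioo a b := Icc_subset_Ioo ht₁.1 ht₂.2
  have hconst : ∀ t ∈ Icc t₁ t₂, G (cexp (t * I)) = ⟨0, (G (cexp (t₁ * I))).im⟩ :=
    fun t htt => Complex.ext (hre t (hIcc htt)) (le_antisymm (hanti ht₁ (hIcc htt) htt.1)
      (heq.symm.le.trans (hanti (hIcc htt) ht₂ htt.2)))
  have hG0 := eqOn_ball_of_eqOn_exp_ofReal_mul_I hU hG ht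
    ((union_subset_union_right _ (image_mono hIcc)).trans hsub) hconst (mem_ball_self one_pos)
  simpa [hG0] using hpos 0 (mem_ball_self one_pos)

end UnitCircleArc

theorem stmt_12_general (h htil : ℂ → ℝ) (μ₀ : ℝ) (a b : ℝ)
    (arcI : Set ℂ)
    (harc : arcI = (fun t : ℝ => Complex.exp ((t:ℂ) * Complex.I)) '' Set.Ioo a b)
    (hcont : ContinuousOn h (Metric.ball (0:ℂ) 1 ∪ arcI))
    (hpos : ∀ z ∈ Metric.ball (0:ℂ) 1, 0 < h z)
    (hzero : ∀ y ∈ arcI, h y = 0)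
    (G : ℂ → ℂ) (U : Set ℂ)
    (hU : IsOpen U) (hsub : Metric.ball (0:ℂ) 1 ∪ arcI ⊆ U)
    (hG : DifferentiableOn ℂ G U)
    (hGeq : ∀ z ∈ Metric.ball (0:ℂ) 1,
      G z = (h z : ℂ) + Complex.I * (htil z : ℂ) - Complex.I * ((μ₀ / Real.pi : ℝ) : ℂ)) :
    StrictAntiOn (fun t : ℝ => (G (Complex.exp ((t:ℂ) * Complex.I))).im) (Set.Ioo a b) ∧
    (∀ y ∈ arcI, (G y).re = 0) ∧
    Set.InjOn G arcI ∧
    (∀ y₁ ∈ arcI, ∀ y₂ ∈ arcI, G y₁ = 0 → G y₂ = 0 → y₁ = y₂) := by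
  subst harc
  have hreG : EqOn (fun z => (G z).re) h (ball 0 1) := fun z hz => by simp [hGeq z hz]
  have hboundary : EqOn (fun z => (G z).re) h (ball 0 1 ∪ _) :=
    hreG.of_subset_closure (continuous_re.comp_continuousOn (hG.continuousOn.mono hsub)) hcont
      subset_union_left
      (ball_union_subset_closure_ball one_ne_zero (exp_ofReal_mul_I_image_subset_sphere _))
  have hre : ∀ y ∈ (fun t : ℝ => cexp (t * I)) '' Ioo a b, (G y).re = 0 := fun y hy =>
    (hboundary (Or.inr hy)).trans (hzero y hy)
  have hanti := strictAntiOn_im_comp_exp_ofReal_mul_I hU hG hsub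
    (fun t ht => hre _ (mem_image_of_mem _ ht)) fun z hz => (hpos z hz).trans_eq (hreG hz).symm
  have hinj : InjOn G ((fun t : ℝ => cexp (t * I)) '' Ioo a b) :=
    (hanti.injOn.of_comp (g := im) (f := G ∘ fun t : ℝ => cexp (t * I))).image_of_comp
  exact ⟨hanti, hre, hinj, fun y₁ hy₁ y₂ hy₂ h₁ h₂ => hinj hy₁ hy₂ (h₁.trans h₂.symm)⟩

/-- If `h` is continuous on `D_* ∪ I`, harmonic and positive on `D_*`, vanishes on the
open arc `I`, and `f = h + i·h̃ − i·μ₀/π` extends analytically across `I` (extension `G`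
on an open `U ⊇ D_* ∪ I`), then `t ↦ Im G(e^{it})` is strictly monotone on `I`, `G` maps
`I` injectively into the imaginary axis, and `G` has at most one zero on `I`. -/
theorem stmt_12 (h htil : ℂ → ℝ) (μ₀ : ℝ) (a b : ℝ)
    (hab : a < b) (hlen : b - a < 2 * Real.pi)
    (arcI : Set ℂ)
    (harc : arcI = (fun t : ℝ => Complex.exp ((t:ℂ) * Complex.I)) '' Set.Ioo a b)
    (hconj : HasHarmConj h htil)
    (hcont : ContinuousOn h (Metric.ball (0:ℂ) 1 ∪ arcI))
    (hpos : ∀ z ∈ Metric.ball (0:ℂ) 1, 0 < h z)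
    (hzero : ∀ y ∈ arcI, h y = 0)
    (G : ℂ → ℂ) (U : Set ℂ)
    (hU : IsOpen U) (hsub : Metric.ball (0:ℂ) 1 ∪ arcI ⊆ U)
    (hG : DifferentiableOn ℂ G U)
    (hGeq : ∀ z ∈ Metric.ball (0:ℂ) 1,
      G z = (h z : ℂ) + Complex.I * (htil z : ℂ) - Complex.I * ((μ₀ / Real.pi : ℝ) : ℂ)) :
    StrictAntiOn (fun t : ℝ => (G (Complex.exp ((t:ℂ) * Complex.I))).im) (Set.Ioo a b) ∧
    (∀ y ∈ arcI, (G y).re = 0) ∧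
    Set.InjOn G arcI ∧
    (∀ y₁ ∈ arcI, ∀ y₂ ∈ arcI, G y₁ = 0 → G y₂ = 0 → y₁ = y₂) :=
  stmt_12_general h htil μ₀ a b arcI harc hcont hpos hzero G U hU hsub hG hGeq
end
end

section
/- Let ν be a finite positive Borel measure on the unit circle ∂D_*, fix x ∈ ∂D_*, let c = ν({x}), and let h(z) = ∫_{∂D_*} ((1−|z|²)/|y−z|²) dν(y) be the Poisson integral of ν. Then lim_{r→1⁻} (1−r)·h(rx) = 2c. Moreover, if c > 0, then for any real μ₀ and with h̃ the conjugate of h vanishing at 0, ∫_0^1 h(rx)/((h(rx))² + (h̃(rx) − μ₀/π)²) · dr/(1−r) ≤ ∫_0^1 dr/((1−r)·h(rx)) < ∞. -/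
open MeasureTheory Metric Set Filter

noncomputable section

/-!
On the circle the integrand is the Poisson kernel `P(z, y)`, which satisfies Harnack's bounds
`(1 - |z|)/(1 + |z|) ≤ P(z, y) ≤ (1 + |z|)/(1 - |z|)`. Along the ray `r ↦ r x`, the atom of `ν`
at `x` contributes `ν{x} · (1 + r)/(1 - r)` to `h(r x)`, since `P(r x, x) = (1 + r)/(1 - r)`.
On the rest of the circle `(1 - r) P(r x, ·)` is bounded by `2` and tends to `0` pointwise, so by
dominated convergence `(1 - r) h(r x) → 2 ν{x}`. When `ν{x} > 0`, this limit together with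
Harnack's lower bound `h(r x) ≥ ν(ℂ) (1 - r)/2` keeps `(1 - r) h(r x)` bounded below by a positive
constant on `(0, 1)`. That makes `1/((1 - r) h(r x))` bounded, and the first integrand is at most
this one because `a/(a² + b²) ≤ 1/a`.
-/

open Topology Complex

theorem poissonKernel_zero_of_norm_eq_one {y : ℂ} (hy : ‖y‖ = 1) (z : ℂ) :
    poissonKernel 0 z y = (1 - ‖z‖ ^ 2) / ‖y - z‖ ^ 2 := by
  simp [poissonKernel, hy]

theorem poissonKernel_zero_mem_Icc {y z : ℂ} (hy : y ∈ sphere 0 1) (hz : z ∈ ball 0 1) :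
    poissonKernel 0 z y ∈ Icc ((1 - ‖z‖) / (1 + ‖z‖)) ((1 + ‖z‖) / (1 - ‖z‖)) := by
  rw [poissonKernel_eq_re_herglotzRieszKernel, Function.comp_apply, herglotzRieszKernel]
  exact ⟨by simpa using le_re_herglotzRieszKernel hy hz,
    by simpa using re_herglotzRieszKernel_le hy hz⟩

theorem poissonKernel_zero_ofReal_mul_self {x : ℂ} (hx : x ∈ sphere 0 1) {r : ℝ} (hr : r ≠ 1) :
    poissonKernel 0 (r * x) x = (1 + r) / (1 - r) := by
  have hx1 : ‖x‖ = 1 := mem_sphere_zero_iff_norm.1 hx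
  have h1 : (1 : ℝ) - r ≠ 0 := sub_ne_zero.2 hr.symm
  have : x - r * x = ((1 - r : ℝ) : ℂ) * x := by push_cast; ring
  rw [poissonKernel_zero_of_norm_eq_one hx1, this]
  simp only [norm_mul, norm_real, Real.norm_eq_abs, hx1, mul_one, sq_abs]
  field_simp
  ring

theorem measurable_poissonKernel (c w : ℂ) : Measurable (poissonKernel c w) := by
  unfold poissonKernel; fun_prop

theorem norm_ofReal_mul_of_mem_sphere {x : ℂ} (hx : x ∈ sphere 0 1) {r : ℝ} (hr : 0 ≤ r) :
    ‖(r : ℂ) * x‖ = r := by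
  rw [norm_mul, norm_real, Real.norm_of_nonneg hr, mem_sphere_zero_iff_norm.1 hx, mul_one]

theorem ofReal_mul_mem_ball_of_mem_sphere {x : ℂ} (hx : x ∈ sphere 0 1) {r : ℝ}
    (hr : r ∈ Ico 0 1) : (r : ℂ) * x ∈ ball 0 1 := by
  rw [mem_ball_zero_iff, norm_ofReal_mul_of_mem_sphere hx hr.1]
  exact hr.2

theorem one_sub_mul_poissonKernel_zero_ofReal_mul_mem_Icc {x y : ℂ} (hx : x ∈ sphere 0 1)
    (hy : y ∈ sphere 0 1) {r : ℝ} (hr : r ∈ Ico 0 1) :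
    (1 - r) * poissonKernel 0 (r * x) y ∈ Icc ((1 - r) ^ 2 / (1 + r)) (1 + r) := by
  have hP := poissonKernel_zero_mem_Icc hy (ofReal_mul_mem_ball_of_mem_sphere hx hr)
  rw [norm_ofReal_mul_of_mem_sphere hx hr.1] at hP
  have h1 : 0 < 1 - r := sub_pos.2 hr.2
  constructor
  · calc (1 - r) ^ 2 / (1 + r) = (1 - r) * ((1 - r) / (1 + r)) := by ring
      _ ≤ _ := by gcongr; exact hP.1
  · calc (1 - r) * poissonKernel 0 (r * x) y ≤ (1 - r) * ((1 + r) / (1 - r)) := by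
          gcongr; exact hP.2
      _ = 1 + r := by field_simp

theorem tendsto_one_sub_mul_poissonKernel_zero {x y : ℂ} (hy : y ≠ x) :
    Tendsto (fun r : ℝ => (1 - r) * poissonKernel 0 (r * x) y) (𝓝 1) (𝓝 0) := by
  have hyx : ‖y - x‖ ^ 2 ≠ 0 := by simpa [sub_eq_zero] using hy
  have : ContinuousAt (fun r : ℝ => (1 - r) * poissonKernel 0 (r * x) y) 1 := by
    unfold poissonKernel
    fun_prop (disch := simpa using hyx)
  simpa using this.tendsto

theorem integral_eq_integral_poissonKernel_zero {ν : Measure ℂ} (hν : ν (sphere 0 1)ᶜ = 0)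
    (z : ℂ) :
    ∫ y, (1 - ‖z‖ ^ 2) / ‖y - z‖ ^ 2 ∂ν = ∫ y, poissonKernel 0 z y ∂ν := by
  refine integral_congr_ae ?_
  filter_upwards [mem_ae_iff.2 hν] with y hy
  exact (poissonKernel_zero_of_norm_eq_one (by simpa using hy) z).symm

section PoissonIntegral

variable {ν : Measure ℂ} [IsFiniteMeasure ν]

theorem integrable_poissonKernel_zero (hν : ν (sphere 0 1)ᶜ = 0) {z : ℂ} (hz : z ∈ ball 0 1) :
    Integrable (poissonKernel 0 z) ν := by
  refine .of_bound (measurable_poissonKernel 0 z).aestronglyMeasurable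
    ((1 + ‖z‖) / (1 - ‖z‖)) ?_
  filter_upwards [mem_ae_iff.2 hν] with y hy
  have hP := poissonKernel_zero_mem_Icc hy hz
  have h1 : 0 < 1 - ‖z‖ := by simpa using hz
  rw [Real.norm_of_nonneg (le_trans (by positivity) hP.1)]
  exact hP.2

theorem tendsto_setIntegral_compl_singleton_one_sub_mul_poissonKernel_zero
    (hν : ν (sphere 0 1)ᶜ = 0) {x : ℂ} (hx : x ∈ sphere 0 1) :
    Tendsto (fun r : ℝ => ∫ y in {x}ᶜ, (1 - r) * poissonKernel 0 (r * x) y ∂ν) (𝓝[<] 1)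
      (𝓝 0) := by
  have hae : ∀ᵐ y ∂ν.restrict {x}ᶜ, y ∈ sphere 0 1 ∧ y ≠ x := by
    filter_upwards [ae_restrict_le (mem_ae_iff.2 hν),
      ae_restrict_mem (measurableSet_singleton x).compl] with y hy hyx using ⟨hy, hyx⟩
  rw [← integral_zero ℂ ℝ]
  refine tendsto_integral_filter_of_dominated_convergence (fun _ => 2)
    (Eventually.of_forall fun r =>
      ((measurable_poissonKernel _ _).const_mul _).aestronglyMeasurable)
    (by
      filter_upwards [Ioo_mem_nhdsLT (zero_lt_one' ℝ)] with r hr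
      filter_upwards [hae] with y hy
      have hP :=
        one_sub_mul_poissonKernel_zero_ofReal_mul_mem_Icc hx hy.1 (Ioo_subset_Ico_self hr)
      have h1 : 0 < 1 + r := by linarith [hr.1]
      rw [Real.norm_of_nonneg (le_trans (by positivity) hP.1)]
      linarith [hP.2, hr.2])
    (integrable_const 2)
    (by
      filter_upwards [hae] with y hy
      exact (tendsto_one_sub_mul_poissonKernel_zero hy.2).mono_left nhdsWithin_le_nhds)

theorem tendsto_one_sub_mul_integral_poissonKernel_zero (hν : ν (sphere 0 1)ᶜ = 0) {x : ℂ}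
    (hx : x ∈ sphere 0 1) :
    Tendsto (fun r : ℝ => (1 - r) * ∫ y, poissonKernel 0 (r * x) y ∂ν) (𝓝[<] 1)
      (𝓝 (2 * ν.real {x})) := by
  have hsplit : ∀ r ∈ Ioo (0 : ℝ) 1, ν.real {x} * (1 + r) +
      ∫ y in {x}ᶜ, (1 - r) * poissonKernel 0 (r * x) y ∂ν =
      (1 - r) * ∫ y, poissonKernel 0 (r * x) y ∂ν := by
    intro r hr
    have h1 : 1 - r ≠ 0 := (sub_pos.2 hr.2).ne'
    rw [← integral_add_compl (measurableSet_singleton x)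
      (integrable_poissonKernel_zero hν
        (ofReal_mul_mem_ball_of_mem_sphere hx (Ioo_subset_Ico_self hr))),
      integral_singleton, integral_const_mul,
      poissonKernel_zero_ofReal_mul_self hx hr.2.ne, smul_eq_mul]
    field_simp
  have hatom : Tendsto (fun r : ℝ => ν.real {x} * (1 + r)) (𝓝[<] 1) (𝓝 (2 * ν.real {x})) := by
    have hcont : Continuous fun r : ℝ => ν.real {x} * (1 + r) := by fun_prop
    rw [show 2 * ν.real {x} = ν.real {x} * (1 + 1) by ring]
    exact (hcont.tendsto 1).mono_left nhdsWithin_le_nhds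
  simpa using (hatom.add (tendsto_setIntegral_compl_singleton_one_sub_mul_poissonKernel_zero
    hν hx)).congr' (eventually_of_mem (Ioo_mem_nhdsLT (zero_lt_one' ℝ)) hsplit)

theorem mul_one_sub_sq_le_one_sub_mul_integral_poissonKernel_zero (hν : ν (sphere 0 1)ᶜ = 0)
    {x : ℂ} (hx : x ∈ sphere 0 1) {r : ℝ} (hr : r ∈ Ico 0 1) :
    ν.real univ / 2 * (1 - r) ^ 2 ≤ (1 - r) * ∫ y, poissonKernel 0 (r * x) y ∂ν := by
  rw [← integral_const_mul]
  calc ν.real univ / 2 * (1 - r) ^ 2 = ∫ _, (1 - r) ^ 2 / 2 ∂ν := by simp; ring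
    _ ≤ _ := by
      refine integral_mono_ae (integrable_const _)
        ((integrable_poissonKernel_zero hν
          (ofReal_mul_mem_ball_of_mem_sphere hx hr)).const_mul _) ?_
      filter_upwards [mem_ae_iff.2 hν] with y hy
      refine le_trans ?_ (one_sub_mul_poissonKernel_zero_ofReal_mul_mem_Icc hx hy hr).1
      gcongr <;> linarith [hr.1, hr.2]

end PoissonIntegral

theorem exists_pos_forall_Ioo_le_of_tendsto_nhdsLT {g : ℝ → ℝ} {L a : ℝ} (hL : 0 < L)
    (hg : Tendsto g (𝓝[<] 1) (𝓝 L)) (ha : 0 < a) (hlow : ∀ r ∈ Ioo 0 1, a * (1 - r) ^ 2 ≤ g r) :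
    ∃ m > 0, ∀ r ∈ Ioo 0 1, m ≤ g r := by
  obtain ⟨b, hb, hgb⟩ := mem_nhdsLT_iff_exists_Ioo_subset.1
    (hg.eventually (eventually_gt_nhds (half_lt_self hL)))
  have hb1 : 0 < 1 - b := sub_pos.2 hb
  refine ⟨min (L / 2) (a * (1 - b) ^ 2), by positivity, fun r hr => ?_⟩
  rcases le_or_gt r b with hrb | hbr
  · calc min (L / 2) (a * (1 - b) ^ 2) ≤ a * (1 - b) ^ 2 := min_le_right _ _
      _ ≤ a * (1 - r) ^ 2 := by gcongr
      _ ≤ g r := hlow r hr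
  · exact (min_le_left _ _).trans (hgb ⟨hbr, hr.2⟩).le

theorem setLIntegral_ofReal_one_div_lt_top {α : Type*} [MeasurableSpace α] {μ : Measure α}
    {s : Set α} (hs : μ s ≠ ⊤) {g : α → ℝ} {m : ℝ} (hm : 0 < m) (hg : ∀ x ∈ s, m ≤ g x) :
    ∫⁻ x in s, ENNReal.ofReal (1 / g x) ∂μ < ⊤ := by
  calc ∫⁻ x in s, ENNReal.ofReal (1 / g x) ∂μ ≤ ∫⁻ _ in s, ENNReal.ofReal (1 / m) ∂μ :=
        setLIntegral_mono measurable_const fun x hx =>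
          ENNReal.ofReal_le_ofReal (one_div_le_one_div_of_le hm (hg x hx))
    _ < ⊤ := by
      rw [setLIntegral_const]
      exact ENNReal.mul_lt_top ENNReal.ofReal_lt_top hs.lt_top

theorem div_sq_add_sq_mul_one_div_le {a b s : ℝ} (ha : 0 < a) (hs : 0 ≤ s) :
    a / (a ^ 2 + b ^ 2) * (1 / s) ≤ 1 / (s * a) := by
  have hab : a / (a ^ 2 + b ^ 2) ≤ 1 / a := by
    rw [div_le_div_iff₀ (by positivity) ha]
    nlinarith [sq_nonneg b]
  calc a / (a ^ 2 + b ^ 2) * (1 / s) ≤ 1 / a * (1 / s) := by gcongr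
    _ = 1 / (s * a) := by rw [one_div_mul_one_div, mul_comm]

/-- For a finite positive measure `ν` on the unit circle with Poisson integral `h`, a
point `x` on the circle and `c = ν({x})`: `(1−r)·h(rx) → 2c` as `r → 1⁻`; and if
`c > 0` then for any `μ₀` and conjugate `h̃` of `h`,
`∫₀¹ h(rx)/((h(rx))²+(h̃(rx)−μ₀/π)²) · dr/(1−r) ≤ ∫₀¹ dr/((1−r)h(rx)) < ∞`. -/
theorem stmt_15 (ν : MeasureTheory.Measure ℂ) [MeasureTheory.IsFiniteMeasure ν]
    (hν : ν (Metric.sphere (0:ℂ) 1)ᶜ = 0)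
    (x : ℂ) (hx : x ∈ Metric.sphere (0:ℂ) 1)
    (h : ℂ → ℝ)
    (hdef : ∀ z, h z = ∫ y, (1 - (‖z‖)^2) / (‖y - z‖)^2 ∂ν) :
    Filter.Tendsto (fun r : ℝ => (1 - r) * h ((r:ℂ) * x))
      (nhdsWithin 1 (Set.Iio 1)) (nhds (2 * (ν {x}).toReal)) ∧
    (0 < (ν {x}).toReal → ∀ (μ₀ : ℝ) (htil : ℂ → ℝ), HasHarmConj h htil →
      (∫⁻ r in Set.Ioo (0:ℝ) 1,
          ENNReal.ofReal (h ((r:ℂ) * x)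
            / ((h ((r:ℂ) * x))^2 + (htil ((r:ℂ) * x) - μ₀ / Real.pi)^2) * (1 / (1 - r))))
        ≤ ∫⁻ r in Set.Ioo (0:ℝ) 1, ENNReal.ofReal (1 / ((1 - r) * h ((r:ℂ) * x))) ∧
      (∫⁻ r in Set.Ioo (0:ℝ) 1, ENNReal.ofReal (1 / ((1 - r) * h ((r:ℂ) * x)))) < ⊤) := by
  obtain rfl : h = fun z => ∫ y, poissonKernel 0 z y ∂ν :=
    funext fun z => (hdef z).trans (integral_eq_integral_poissonKernel_zero hν z)
  have hlim := tendsto_one_sub_mul_integral_poissonKernel_zero hν hx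
  refine ⟨hlim, fun hc μ₀ htil _ => ?_⟩
  have htot : 0 < ν.real univ / 2 := half_pos (hc.trans_le (measureReal_mono (subset_univ _)))
  obtain ⟨m, hm, hmle⟩ := exists_pos_forall_Ioo_le_of_tendsto_nhdsLT (by positivity) hlim htot
    fun r hr => mul_one_sub_sq_le_one_sub_mul_integral_poissonKernel_zero hν hx
      (Ioo_subset_Ico_self hr)
  refine ⟨setLIntegral_mono' measurableSet_Ioo fun r hr => ENNReal.ofReal_le_ofReal ?_,
    setLIntegral_ofReal_one_div_lt_top (by simp) hm hmle⟩
  have h1 : 0 < 1 - r := sub_pos.2 hr.2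
  exact div_sq_add_sq_mul_one_div_le (pos_of_mul_pos_right (hm.trans_le (hmle r hr)) h1.le) h1.le
end
end

section
/- Let D = F(D_*) where F(z) = √(1−z) (principal branch) maps the open unit disk D_* conformally onto D, and define h on D by h(w) = Re((1+z)/(1−z)) with z = F^{-1}(w) = 1 − w². Then h is positive harmonic on D but h ∉ L^1(D); in fact, with C = {z ∈ D_* : 1−|z|² > |1−z|}, one has ∫_D h(w) dw = ∫_C Re((1+z)/(1−z))·|F'(z)|² dz ≥ (1/4)∫_C |1−z|^{−2} dz = ∞. -/
open MeasureTheory Metric Set Filter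

noncomputable section

open scoped ENNReal

/-!
Near `w = 0` the domain `D` contains the sector `|Im w| < Re w / 2`, on which
`h w = (1 - ‖1 - w²‖²) / ‖w‖⁴ ≥ (Re w)⁻² / 4`. Near `z = 1` the region `C` contains the sector
`|Im (1 - z)| < Re (1 - z)`, and on all of `C` the inequality `1 - ‖z‖² > ‖1 - z‖` together with
`‖F'(z)‖² = 1 / (4 ‖1 - z‖)` gives `Re ((1 + z) / (1 - z)) ‖F'(z)‖² ≥ ‖1 - z‖⁻² / 4`.
Finally `(Re z)⁻²` has infinite integral over every sector at `0`: each dyadic piece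
`r < Re z < 2r` contributes a fixed positive amount. So all three integrals are infinite.
-/

namespace Complex

lemma volume_reProdIm (s t : Set ℝ) : volume (s ×ℂ t) = volume s * volume t := by
  rw [← Measure.prod_prod, ← Measure.volume_eq_prod,
    ← volume_preserving_equiv_real_prod.measure_preimage_equiv]
  rfl

lemma re_one_add_div_one_sub (z : ℂ) :
    ((1 + z) / (1 - z)).re = (1 - ‖z‖ ^ 2) / ‖1 - z‖ ^ 2 := by
  rw [div_re, ← add_div, Complex.sq_norm, Complex.sq_norm, normSq_apply, normSq_apply]
  congr 1
  simp only [add_re, sub_re, add_im, sub_im, one_re, one_im]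
  ring

lemma one_sub_norm_one_sub_sq (z : ℂ) : 1 - ‖1 - z‖ ^ 2 = 2 * z.re - ‖z‖ ^ 2 := by
  simp only [Complex.sq_norm, normSq_apply, sub_re, sub_im, one_re, one_im]
  ring

lemma re_one_add_div_one_sub_pos {z : ℂ} (hz : ‖z‖ < 1) : 0 < ((1 + z) / (1 - z)).re := by
  have hz1 : 1 - z ≠ 0 := sub_ne_zero.2 fun h => by simp [← h] at hz
  rw [re_one_add_div_one_sub]
  have : ‖z‖ ^ 2 < 1 := by nlinarith [norm_nonneg z]
  exact div_pos (by linarith) (by positivity)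

end Complex

def sector (R c : ℝ) : Set ℂ := {z | 0 < z.re ∧ z.re < R ∧ |z.im| < c * z.re}

section Sector

variable {R c : ℝ}

lemma measurableSet_sector : MeasurableSet (sector R c) :=
  (measurableSet_lt measurable_const Complex.measurable_re).inter <|
    (measurableSet_lt Complex.measurable_re measurable_const).inter <|
      measurableSet_lt Complex.measurable_im.abs (measurable_const.mul Complex.measurable_re)

lemma norm_sq_le_of_mem_sector {z : ℂ} (hz : z ∈ sector R c) :
    ‖z‖ ^ 2 ≤ (1 + c ^ 2) * z.re ^ 2 := by
  obtain ⟨hre, -, him⟩ := hz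
  have : z.im ^ 2 ≤ (c * z.re) ^ 2 := sq_le_sq' (abs_lt.1 him).1.le (abs_lt.1 him).2.le
  rw [Complex.sq_norm, Complex.normSq_apply]
  nlinarith

lemma ofReal_half_le_setLIntegral_box {b : ℝ} (hb : 0 < b) (hc : 0 < c) :
    ENNReal.ofReal (c / 2) ≤
      ∫⁻ z in Ioo b (2 * b) ×ℂ Ioo (-(c * b)) (c * b), ENNReal.ofReal (z.re ^ 2)⁻¹ := by
  have hbox : MeasurableSet (Ioo b (2 * b) ×ℂ Ioo (-(c * b)) (c * b)) :=
    (Complex.measurable_re measurableSet_Ioo).inter (Complex.measurable_im measurableSet_Ioo)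
  calc ENNReal.ofReal (c / 2)
      = ENNReal.ofReal ((2 * b) ^ 2)⁻¹ * volume (Ioo b (2 * b) ×ℂ Ioo (-(c * b)) (c * b)) := by
        rw [Complex.volume_reProdIm, Real.volume_Ioo, Real.volume_Ioo,
          ← ENNReal.ofReal_mul (by linarith), ← ENNReal.ofReal_mul (by positivity)]
        congr 1
        field_simp
        ring
    _ = ∫⁻ _ in Ioo b (2 * b) ×ℂ Ioo (-(c * b)) (c * b), ENNReal.ofReal ((2 * b) ^ 2)⁻¹ :=
        (setLIntegral_const _ _).symm
    _ ≤ _ := setLIntegral_mono' hbox fun z hz =>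
        ENNReal.ofReal_le_ofReal <| inv_anti₀ (by nlinarith [hz.1.1]) (by nlinarith [hz.1.1, hz.1.2])

lemma lintegral_sector_inv_re_sq (hR : 0 < R) (hc : 0 < c) :
    ∫⁻ z in sector R c, ENNReal.ofReal (z.re ^ 2)⁻¹ = ∞ := by
  set a : ℕ → ℝ := fun n => R / 2 ^ n
  have ha_pos (n : ℕ) : 0 < a n := by positivity
  have ha_succ (n : ℕ) : 2 * a (n + 1) = a n := by simp only [a, pow_succ]; field_simp
  have ha_anti : Antitone a := fun m n hmn =>
    div_le_div_of_nonneg_left hR.le (by positivity) (pow_le_pow_right₀ one_le_two hmn)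
  set box : ℕ → Set ℂ := fun n => Ioo (a (n + 1)) (a n) ×ℂ Ioo (-(c * a (n + 1))) (c * a (n + 1))
  have hbox_meas (n : ℕ) : MeasurableSet (box n) :=
    (Complex.measurable_re measurableSet_Ioo).inter (Complex.measurable_im measurableSet_Ioo)
  have hbox_disj : Pairwise (Function.onFun Disjoint box) := fun m n hmn =>
    ((ha_anti.pairwise_disjoint_on_Ioo_succ hmn).preimage Complex.re).mono
      inter_subset_left inter_subset_left
  have hbox_sub (n : ℕ) : box n ⊆ sector R c := by
    rintro z ⟨⟨hlo, hhi⟩, him⟩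
    refine ⟨(ha_pos _).trans hlo, hhi.trans_le (ha_anti n.zero_le) |>.trans_eq (by simp [a]), ?_⟩
    exact abs_lt.2 him |>.trans (by nlinarith)
  refine eq_top_iff.2 ?_
  calc ∞ = ∑' _ : ℕ, ENNReal.ofReal (c / 2) :=
        (ENNReal.tsum_const_eq_top_of_ne_zero (by positivity)).symm
    _ ≤ ∑' n, ∫⁻ z in box n, ENNReal.ofReal (z.re ^ 2)⁻¹ := ENNReal.tsum_le_tsum fun n => by
        simpa only [box, ha_succ] using ofReal_half_le_setLIntegral_box (ha_pos (n + 1)) hc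
    _ = ∫⁻ z in ⋃ n, box n, ENNReal.ofReal (z.re ^ 2)⁻¹ :=
        (lintegral_iUnion hbox_meas hbox_disj _).symm
    _ ≤ _ := lintegral_mono_set (iUnion_subset hbox_sub)

lemma setLIntegral_eq_top_of_sector_subset {s : Set ℂ} {f : ℂ → ℝ} {k : ℝ}
    (hR : 0 < R) (hc : 0 < c) (hk : 0 < k) (hs : sector R c ⊆ s)
    (hf : ∀ z ∈ sector R c, k * (z.re ^ 2)⁻¹ ≤ f z) :
    ∫⁻ z in s, ENNReal.ofReal (f z) = ∞ := by
  refine eq_top_iff.2 ?_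
  calc ∞ = ENNReal.ofReal k * ∫⁻ z in sector R c, ENNReal.ofReal (z.re ^ 2)⁻¹ := by
        rw [lintegral_sector_inv_re_sq hR hc, ENNReal.mul_top (by positivity)]
    _ = ∫⁻ z in sector R c, ENNReal.ofReal (k * (z.re ^ 2)⁻¹) := by
        rw [← lintegral_const_mul' _ _ ENNReal.ofReal_ne_top]
        refine setLIntegral_congr_fun measurableSet_sector fun z hz => ?_
        rw [ENNReal.ofReal_mul hk.le]
    _ ≤ ∫⁻ z in sector R c, ENNReal.ofReal (f z) :=
        setLIntegral_mono' measurableSet_sector fun z hz => ENNReal.ofReal_le_ofReal (hf z hz)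
    _ ≤ _ := lintegral_mono_set hs

end Sector

lemma re_sq_le_two_mul_one_sub_norm_one_sub_sq {w : ℂ} (hw : w ∈ sector (1/2) (1/2)) :
    w.re ^ 2 ≤ 2 * (1 - ‖1 - w ^ 2‖ ^ 2) := by
  have hnorm := norm_sq_le_of_mem_sector hw
  have hre : (w ^ 2).re = w.re ^ 2 - w.im ^ 2 := by simp only [sq, Complex.mul_re]
  have hnorm' : ‖w‖ ^ 2 = w.re ^ 2 + w.im ^ 2 := by
    rw [Complex.sq_norm, Complex.normSq_apply]; ring
  obtain ⟨hx, hxR, -⟩ := hw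
  have hnorm_sq : (‖w‖ ^ 2) ^ 2 ≤ ((1 + (1 / 2) ^ 2) * w.re ^ 2) ^ 2 :=
    pow_le_pow_left₀ (by positivity) hnorm 2
  have hx4 : w.re ^ 4 ≤ w.re ^ 2 / 4 := by
    have hx2 : w.re ^ 2 ≤ 1 / 4 := by nlinarith
    nlinarith [mul_le_mul_of_nonneg_left hx2 (sq_nonneg w.re)]
  rw [Complex.one_sub_norm_one_sub_sq, norm_pow, hre]
  nlinarith

lemma sector_subset_image_cpow_half :
    sector (1/2) (1/2) ⊆ (fun z : ℂ => (1 - z) ^ ((1:ℂ) / 2)) '' ball 0 1 := by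
  intro w hw
  have := re_sq_le_two_mul_one_sub_norm_one_sub_sq hw
  have hx := hw.1
  refine ⟨1 - w ^ 2, mem_ball_zero_iff.2 ?_, ?_⟩
  · nlinarith [norm_nonneg (1 - w ^ 2)]
  · simp only [sub_sub_cancel, one_div]
    exact Complex.sq_cpow_two_inv hx

lemma quarter_mul_inv_re_sq_le_of_mem_sector {w : ℂ} (hw : w ∈ sector (1/2) (1/2)) :
    1 / 4 * (w.re ^ 2)⁻¹ ≤ ((1 + (1 - w ^ 2)) / (1 - (1 - w ^ 2))).re := by
  have hmass := re_sq_le_two_mul_one_sub_norm_one_sub_sq hw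
  have hnorm := norm_sq_le_of_mem_sector hw
  have hx := hw.1
  have hw0 : 0 < ‖w‖ := norm_pos_iff.2 fun h => by simp [h] at hx
  have hnorm_sq : (‖w‖ ^ 2) ^ 2 ≤ ((1 + (1 / 2) ^ 2) * w.re ^ 2) ^ 2 :=
    pow_le_pow_left₀ (by positivity) hnorm 2
  rw [Complex.re_one_add_div_one_sub, sub_sub_cancel, norm_pow]
  calc 1 / 4 * (w.re ^ 2)⁻¹ = (w.re ^ 2 / 2) / (2 * (w.re ^ 2) ^ 2) := by
        field_simp
        ring
    _ ≤ (1 - ‖1 - w ^ 2‖ ^ 2) / (‖w‖ ^ 2) ^ 2 :=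
        div_le_div₀ (by linarith [sq_nonneg w.re]) (by linarith) (by positivity) (by nlinarith)

lemma norm_sq_deriv_cpow_half_one_sub {z : ℂ} (hz : 1 - z ∈ Complex.slitPlane) :
    ‖deriv (fun z : ℂ => (1 - z) ^ ((1:ℂ) / 2)) z‖ ^ 2 = (4 * ‖1 - z‖)⁻¹ := by
  have hne : 1 - z ≠ 0 := Complex.slitPlane_ne_zero hz
  have hsq : ‖(1 - z) ^ ((1:ℂ) / 2)‖ ^ 2 = ‖1 - z‖ := by
    rw [← norm_pow, one_div, Complex.cpow_ofNat_inv_pow]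
  rw [(((hasDerivAt_id' z).const_sub 1).cpow_const hz).deriv, Complex.cpow_sub _ _ hne,
    Complex.cpow_one]
  simp only [norm_mul, norm_div, norm_neg, norm_one, mul_one, mul_pow, div_pow, hsq]
  have : 0 < ‖1 - z‖ := norm_pos_iff.2 hne
  norm_num
  field_simp

def stolzRegion : Set ℂ := {z : ℂ | z ∈ ball (0:ℂ) 1 ∧ ‖1 - z‖ < 1 - (‖z‖)^2}

lemma measurableSet_stolzRegion : MeasurableSet stolzRegion :=
  (isOpen_ball.inter (isOpen_lt (by fun_prop) (by fun_prop) :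
    IsOpen {z : ℂ | ‖1 - z‖ < 1 - ‖z‖ ^ 2})).measurableSet

lemma one_sub_mem_stolzRegion {u : ℂ} (hu : u ∈ sector (1/4) 1) : 1 - u ∈ stolzRegion := by
  have hnorm := norm_sq_le_of_mem_sector hu
  obtain ⟨hx, hxR, -⟩ := hu
  have hmass := Complex.one_sub_norm_one_sub_sq u
  have hu_le : ‖u‖ ≤ 3 / 2 * u.re := by nlinarith [norm_nonneg u]
  refine ⟨mem_ball_zero_iff.2 ?_, ?_⟩
  · nlinarith [norm_nonneg (1 - u)]
  · rw [sub_sub_cancel]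
    nlinarith

lemma quarter_mul_inv_norm_one_sub_sq_le {z : ℂ} (hz : z ∈ stolzRegion) :
    1 / 4 * (1 / ‖1 - z‖ ^ 2) ≤
      ((1 + z) / (1 - z)).re * ‖deriv (fun z : ℂ => (1 - z) ^ ((1:ℂ) / 2)) z‖ ^ 2 := by
  obtain ⟨hz1, hcone⟩ := hz
  have hre : 0 < (1 - z).re := by
    have := (Complex.re_le_norm z).trans_lt (mem_ball_zero_iff.1 hz1)
    simp only [Complex.sub_re, Complex.one_re]
    linarith
  have hpos : 0 < ‖1 - z‖ := norm_pos_iff.2 fun h => by simp [h] at hre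
  rw [Complex.re_one_add_div_one_sub, norm_sq_deriv_cpow_half_one_sub (.inl hre)]
  calc 1 / 4 * (1 / ‖1 - z‖ ^ 2) = ‖1 - z‖ / ‖1 - z‖ ^ 2 * (4 * ‖1 - z‖)⁻¹ := by
        field_simp
    _ ≤ (1 - ‖z‖ ^ 2) / ‖1 - z‖ ^ 2 * (4 * ‖1 - z‖)⁻¹ := by gcongr

lemma quarter_mul_setLIntegral_stolzRegion_le :
    (1 / 4 : ℝ≥0∞) * ∫⁻ z in stolzRegion, ENNReal.ofReal (1 / ‖1 - z‖ ^ 2) ≤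
      ∫⁻ z in stolzRegion, ENNReal.ofReal
        (((1 + z) / (1 - z)).re * ‖deriv (fun z : ℂ => (1 - z) ^ ((1:ℂ) / 2)) z‖ ^ 2) := by
  rw [← lintegral_const_mul' _ _ (by norm_num)]
  refine setLIntegral_mono' measurableSet_stolzRegion fun z hz => ?_
  calc (1 / 4 : ℝ≥0∞) * ENNReal.ofReal (1 / ‖1 - z‖ ^ 2)
      = ENNReal.ofReal (1 / 4 * (1 / ‖1 - z‖ ^ 2)) := by
        rw [ENNReal.ofReal_mul (by norm_num), ENNReal.ofReal_div_of_pos four_pos]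
        simp
    _ ≤ _ := ENNReal.ofReal_le_ofReal (quarter_mul_inv_norm_one_sub_sq_le hz)

lemma setLIntegral_stolzRegion_inv_norm_one_sub_sq :
    ∫⁻ z in stolzRegion, ENNReal.ofReal (1 / ‖1 - z‖ ^ 2) = ∞ := by
  rw [← (Measure.measurePreserving_sub_left volume 1).setLIntegral_comp_preimage_emb
    (MeasurableEquiv.subLeft 1).measurableEmbedding]
  refine setLIntegral_eq_top_of_sector_subset (R := 1 / 4) (c := 1) (by norm_num) one_pos
    (by norm_num : (0:ℝ) < 1 / 2) (fun u hu => one_sub_mem_stolzRegion hu) fun u hu => ?_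
  have hnorm := norm_sq_le_of_mem_sector hu
  have hx := hu.1
  have hu0 : 0 < ‖u‖ := norm_pos_iff.2 fun h => by simp [h] at hx
  rw [sub_sub_cancel]
  calc 1 / 2 * (u.re ^ 2)⁻¹ = 1 / (2 * u.re ^ 2) := by field_simp
    _ ≤ 1 / ‖u‖ ^ 2 := one_div_le_one_div_of_le (by positivity) (by linarith)

/-- Let `D = F(D_*)` with `F(z) = (1−z)^{1/2}` (principal branch) and
`h(w) = Re((1+z)/(1−z))` with `z = 1 − w²`. Then `h` is positive harmonic on `D` but not
in `L¹(D)`; indeed, with `C = {z ∈ D_* : 1−|z|² > |1−z|}`, the `L¹` mass of `h` over `D`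
equals `∫_C Re((1+z)/(1−z))|F'(z)|² dz ≥ (1/4)∫_C |1−z|^{−2} dz = ∞`. -/
theorem stmt_19 (F : ℂ → ℂ) (hF : ∀ z, F z = (1 - z) ^ ((1:ℂ) / 2))
    (h : ℂ → ℝ) (hh : ∀ w, h w = (((1 + (1 - w^2)) / (1 - (1 - w^2)) : ℂ)).re)
    (D C : Set ℂ)
    (hD : D = F '' Metric.ball (0:ℂ) 1)
    (hC : C = {z : ℂ | z ∈ Metric.ball (0:ℂ) 1 ∧
      ‖1 - z‖ < 1 - (‖z‖)^2}) :
    (∃ G : ℂ → ℂ, DifferentiableOn ℂ G D ∧ ∀ w ∈ D, (G w).re = h w) ∧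
    (∀ w ∈ D, 0 < h w) ∧
    ¬ MeasureTheory.IntegrableOn h D ∧
    (∫⁻ w in D, ENNReal.ofReal (h w))
      = (∫⁻ z in C, ENNReal.ofReal ((((1 + z) / (1 - z)).re) * (‖deriv F z‖)^2)) ∧
    (1 / 4 : ENNReal) * (∫⁻ z in C, ENNReal.ofReal (1 / (‖1 - z‖)^2))
      ≤ (∫⁻ z in C, ENNReal.ofReal ((((1 + z) / (1 - z)).re) * (‖deriv F z‖)^2)) ∧
    (1 / 4 : ENNReal) * (∫⁻ z in C, ENNReal.ofReal (1 / (‖1 - z‖)^2)) = ⊤ := by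
  obtain rfl : F = fun z => (1 - z) ^ ((1:ℂ) / 2) := funext hF
  obtain rfl : C = stolzRegion := hC
  subst hD
  have hD : ∀ w ∈ (fun z : ℂ => (1 - z) ^ ((1:ℂ) / 2)) '' ball 0 1, ‖1 - w ^ 2‖ < 1 := by
    rintro _ ⟨z, hz, rfl⟩
    rwa [one_div, Complex.cpow_ofNat_inv_pow, sub_sub_cancel, ← mem_ball_zero_iff]
  have hD_top : ∫⁻ w in (fun z : ℂ => (1 - z) ^ ((1:ℂ) / 2)) '' ball 0 1,
      ENNReal.ofReal (h w) = ∞ :=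
    setLIntegral_eq_top_of_sector_subset (by norm_num) (by norm_num) (by norm_num : (0:ℝ) < 1 / 4)
      sector_subset_image_cpow_half
      fun w hw => (hh w).symm ▸ quarter_mul_inv_re_sq_le_of_mem_sector hw
  have hC_top : (1 / 4 : ℝ≥0∞) * ∫⁻ z in stolzRegion, ENNReal.ofReal (1 / ‖1 - z‖ ^ 2) = ∞ := by
    rw [setLIntegral_stolzRegion_inv_norm_one_sub_sq, ENNReal.mul_top (by norm_num)]
  have hC_le := quarter_mul_setLIntegral_stolzRegion_le
  refine ⟨⟨fun w => (1 + (1 - w ^ 2)) / (1 - (1 - w ^ 2)), ?_, fun w _ => (hh w).symm⟩,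
    fun w hw => (hh w).symm ▸ Complex.re_one_add_div_one_sub_pos (hD w hw),
    fun hint => hint.lintegral_lt_top.ne hD_top,
    hD_top.trans (top_le_iff.1 (hC_top ▸ hC_le)).symm, hC_le, hC_top⟩
  exact DifferentiableOn.div (by fun_prop) (by fun_prop)
    fun w hw => sub_ne_zero.2 fun heq => (hD w hw).ne (by rw [← heq, norm_one])
end
end
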